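/- (Initial-condition part of Theorem 1.) Let k_d ∈ ℝ, r0 > 1, let α, β, γ be pairwise distinct real numbers, and let P(r,t) be the Green's function. Then for every fixed r > 1 with r ≠ r0, P(r,t) → 0 as t → 0⁺; i.e., away from the release point r0 the Green's function vanishes at the initial time, consistent with the Dirac-delta initial condition P(r, t→0) = δ(r − r0)/(4π r0²). -/
import Mathlib

/-- The complementary error function `erfc(x) = (2/√π)·∫_x^∞ exp(−u²) du`. -/
noncomputable def erfc (x : ℝ) : ℝ :=
  (2 / Real.sqrt Real.pi) * ∫ u in Set.Ioi x, Real.exp (-u ^ 2)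

/-- `W(n,m) = exp(2·n·m + m²)·erfc(n+m)`. -/
noncomputable def W (n m : ℝ) : ℝ :=
  Real.exp (2 * n * m + m ^ 2) * erfc (n + m)

/-- `η₁ = α(γ+α)(α+β)/((γ−α)(α−β))`. -/
noncomputable def eta1 (α β γ : ℝ) : ℝ := α * (γ + α) * (α + β) / ((γ - α) * (α - β))

/-- `η₂ = β(γ+β)(α+β)/((β−γ)(α−β))`. -/
noncomputable def eta2 (α β γ : ℝ) : ℝ := β * (γ + β) * (α + β) / ((β - γ) * (α - β))

/-- `η₃ = γ(γ+β)(α+γ)/((β−γ)(γ−α))`. -/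
noncomputable def eta3 (α β γ : ℝ) : ℝ := γ * (γ + β) * (α + γ) / ((β - γ) * (γ - α))

/-- The Green's function of the reactive-receiver diffusion channel (Theorem 1):
`P(r,t) = exp(−k_d·t)·[ (1/(8π·r·r0·√(π·t)))·( exp(−(r−r0)²/(4t)) + exp(−(r+r0−2)²/(4t)) )
  − (1/(4π·r·r0))·( η₁·W((r+r0−2)/(2√t), α√t) + η₂·W((r+r0−2)/(2√t), β√t)
  + η₃·W((r+r0−2)/(2√t), γ√t) ) ]`. -/
noncomputable def greenP (k_d r0 α β γ : ℝ) (r t : ℝ) : ℝ :=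
  Real.exp (-k_d * t) *
    ((1 / (8 * Real.pi * r * r0 * Real.sqrt (Real.pi * t))) *
        (Real.exp (-(r - r0) ^ 2 / (4 * t)) + Real.exp (-(r + r0 - 2) ^ 2 / (4 * t)))
      - (1 / (4 * Real.pi * r * r0)) *
        (eta1 α β γ * W ((r + r0 - 2) / (2 * Real.sqrt t)) (α * Real.sqrt t)
          + eta2 α β γ * W ((r + r0 - 2) / (2 * Real.sqrt t)) (β * Real.sqrt t)
          + eta3 α β γ * W ((r + r0 - 2) / (2 * Real.sqrt t)) (γ * Real.sqrt t)))

open Filter Topology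

section Aux

open Set MeasureTheory Real

lemma erfc_tendsto_zero : Tendsto erfc atTop (𝓝 0) := by
  have h0 : Tendsto (fun x : ℝ => (2 / Real.sqrt Real.pi) * Real.exp (-x)) atTop (𝓝 0) := by
    simpa using (Real.tendsto_exp_neg_atTop_nhds_zero.const_mul (2 / Real.sqrt Real.pi))
  refine tendsto_of_tendsto_of_tendsto_of_le_of_le' tendsto_const_nhds h0 ?_ ?_
  · filter_upwards with x
    have : 0 ≤ ∫ u in Set.Ioi x, Real.exp (-u ^ 2) :=
      setIntegral_nonneg measurableSet_Ioi (fun u _ => (Real.exp_pos _).le)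
    exact mul_nonneg (by positivity) this
  · filter_upwards [eventually_ge_atTop (1 : ℝ)] with x hx
    have hint1 : IntegrableOn (fun u : ℝ => Real.exp (-u ^ 2)) (Set.Ioi x) := by
      have := (integrable_exp_neg_mul_sq (b := 1) one_pos).integrableOn (s := Set.Ioi x)
      simpa using this
    have hint2 : IntegrableOn (fun u : ℝ => Real.exp (-u)) (Set.Ioi x) := by
      have := exp_neg_integrableOn_Ioi x (b := 1) one_pos
      simpa using this
    have hle : (∫ u in Set.Ioi x, Real.exp (-u ^ 2)) ≤ ∫ u in Set.Ioi x, Real.exp (-u) := by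
      refine setIntegral_mono_on hint1 hint2 measurableSet_Ioi ?_
      intro u hu
      have hu1 : (1 : ℝ) ≤ u := le_trans hx (le_of_lt hu)
      have : u ≤ u ^ 2 := by nlinarith
      exact Real.exp_le_exp.mpr (by linarith)
    rw [integral_exp_neg_Ioi] at hle
    exact mul_le_mul_of_nonneg_left hle (by positivity)

lemma sqrt_tendsto_pos : Tendsto Real.sqrt (𝓝[>] (0:ℝ)) (𝓝[>] (0:ℝ)) := by
  rw [tendsto_nhdsWithin_iff]
  constructor
  · simpa using ((Real.continuous_sqrt.tendsto 0).mono_left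
      (nhdsWithin_le_nhds : 𝓝[>] (0:ℝ) ≤ 𝓝 0))
  · filter_upwards [self_mem_nhdsWithin] with t ht
    exact Real.sqrt_pos.mpr ht

lemma inv_sqrt_atTop : Tendsto (fun t : ℝ => (Real.sqrt t)⁻¹) (𝓝[>] (0:ℝ)) atTop :=
  tendsto_inv_nhdsGT_zero.comp sqrt_tendsto_pos

lemma gauss_tendsto (c : ℝ) (hc : 0 < c) :
    Tendsto (fun t : ℝ => (1 / Real.sqrt (Real.pi * t)) * Real.exp (-c / (4 * t)))
      (𝓝[>] (0:ℝ)) (𝓝 0) := by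
  have hg : Tendsto (fun s : ℝ => (Real.sqrt Real.pi)⁻¹ * (s ^ ((1:ℝ)/2) * Real.exp (-(c/4) * s)))
      atTop (𝓝 0) := by
    simpa using (tendsto_rpow_mul_exp_neg_mul_atTop_nhds_zero ((1:ℝ)/2) (c/4)
      (by positivity)).const_mul (Real.sqrt Real.pi)⁻¹
  have hcomp := hg.comp (tendsto_inv_nhdsGT_zero : Tendsto (fun t : ℝ => t⁻¹) (𝓝[>] (0:ℝ)) atTop)
  refine hcomp.congr' ?_
  filter_upwards [self_mem_nhdsWithin] with t (ht : 0 < t)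
  have h1 : (t⁻¹) ^ ((1:ℝ)/2) = (Real.sqrt t)⁻¹ := by
    rw [← Real.sqrt_eq_rpow, Real.sqrt_inv]
  simp only [Function.comp]
  rw [h1, Real.sqrt_mul Real.pi_pos.le]
  field_simp

lemma W_tendsto (a c : ℝ) (hc : 0 < c) :
    Tendsto (fun t : ℝ => W (c / (2 * Real.sqrt t)) (a * Real.sqrt t)) (𝓝[>] (0:ℝ)) (𝓝 0) := by
  have harg : Tendsto (fun t : ℝ => c / (2 * Real.sqrt t) + a * Real.sqrt t)
      (𝓝[>] (0:ℝ)) atTop := by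
    have h1 : Tendsto (fun t : ℝ => c / (2 * Real.sqrt t)) (𝓝[>] (0:ℝ)) atTop := by
      have := inv_sqrt_atTop.const_mul_atTop (by positivity : (0:ℝ) < c / 2)
      refine this.congr fun t => ?_
      rw [eq_comm, div_eq_mul_inv, mul_inv]; ring
    have h2 : Tendsto (fun t : ℝ => a * Real.sqrt t) (𝓝[>] (0:ℝ)) (𝓝 (a * Real.sqrt 0)) :=
      (((continuous_const.mul Real.continuous_sqrt)).tendsto 0).mono_left nhdsWithin_le_nhds
    exact h1.atTop_add h2
  have herfc : Tendsto (fun t : ℝ => erfc (c / (2 * Real.sqrt t) + a * Real.sqrt t))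
      (𝓝[>] (0:ℝ)) (𝓝 0) := erfc_tendsto_zero.comp harg
  have hexp : Tendsto (fun t : ℝ => Real.exp (c * a + a ^ 2 * t)) (𝓝[>] (0:ℝ))
      (𝓝 (Real.exp (c * a + a ^ 2 * 0))) :=
    ((Real.continuous_exp.comp (by continuity)).tendsto 0).mono_left nhdsWithin_le_nhds
  have := hexp.mul herfc
  rw [mul_zero] at this
  refine this.congr' ?_
  filter_upwards [self_mem_nhdsWithin] with t (ht : 0 < t)
  have hst : Real.sqrt t ≠ 0 := ne_of_gt (Real.sqrt_pos.mpr ht)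
  unfold W
  congr 2
  have h2 : (a * Real.sqrt t) ^ 2 = a ^ 2 * t := by
    rw [mul_pow, Real.sq_sqrt ht.le]
  rw [h2]
  congr 1
  field_simp

end Aux

/-- (Initial-condition part of Theorem 1.) For `k_d ∈ ℝ`, `r0 > 1`, pairwise distinct reals
`α, β, γ`, and every fixed `r > 1` with `r ≠ r0`, the Green's function `P(r,t)` tends to `0`
as `t → 0⁺`: away from the release point the Green's function vanishes at the initial time,
consistent with the Dirac-delta initial condition. -/
theorem greenP_tendsto_zero_at_initial_time
    (k_d : ℝ) (r0 : ℝ) (hr0 : 1 < r0)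
    (α β γ : ℝ) (hαβ : α ≠ β) (hβγ : β ≠ γ) (hαγ : α ≠ γ)
    (r : ℝ) (hr : 1 < r) (hrr0 : r ≠ r0) :
    Tendsto (fun t : ℝ => greenP k_d r0 α β γ r t) (𝓝[>] 0) (𝓝 0) := by
  have hc1 : (0:ℝ) < (r - r0) ^ 2 := by
    have : r - r0 ≠ 0 := sub_ne_zero.mpr hrr0
    positivity
  have hc2 : (0:ℝ) < r + r0 - 2 := by linarith
  have hA : Tendsto (fun t : ℝ =>
      (1 / (8 * Real.pi * r * r0 * Real.sqrt (Real.pi * t))) *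
        (Real.exp (-(r - r0) ^ 2 / (4 * t)) + Real.exp (-(r + r0 - 2) ^ 2 / (4 * t))))
      (𝓝[>] (0:ℝ)) (𝓝 0) := by
    have h1 := gauss_tendsto ((r - r0) ^ 2) hc1
    have h2 := gauss_tendsto ((r + r0 - 2) ^ 2) (by positivity)
    have := (h1.add h2).const_mul (1 / (8 * Real.pi * r * r0))
    rw [add_zero, mul_zero] at this
    refine this.congr fun t => ?_
    simp only [div_eq_mul_inv, one_mul, mul_inv]
    ring
  have hB : Tendsto (fun t : ℝ =>
      (1 / (4 * Real.pi * r * r0)) *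
        (eta1 α β γ * W ((r + r0 - 2) / (2 * Real.sqrt t)) (α * Real.sqrt t)
          + eta2 α β γ * W ((r + r0 - 2) / (2 * Real.sqrt t)) (β * Real.sqrt t)
          + eta3 α β γ * W ((r + r0 - 2) / (2 * Real.sqrt t)) (γ * Real.sqrt t)))
      (𝓝[>] (0:ℝ)) (𝓝 0) := by
    have h1 := (W_tendsto α (r + r0 - 2) hc2).const_mul (eta1 α β γ)
    have h2 := (W_tendsto β (r + r0 - 2) hc2).const_mul (eta2 α β γ)
    have h3 := (W_tendsto γ (r + r0 - 2) hc2).const_mul (eta3 α β γ)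
    have := ((h1.add h2).add h3).const_mul (1 / (4 * Real.pi * r * r0))
    simpa using this
  have hexp : Tendsto (fun t : ℝ => Real.exp (-k_d * t)) (𝓝[>] (0:ℝ))
      (𝓝 (Real.exp (-k_d * 0))) :=
    ((Real.continuous_exp.comp (by continuity)).tendsto 0).mono_left nhdsWithin_le_nhds
  have := hexp.mul (hA.sub hB)
  simpa [greenP] using this
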